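/- arXiv:2208.05525 — 3 statements merged into one kernel-verified Lean document; each statement's English description precedes it below -/
import Mathlib

section
/- Let A, B be commuting 3×3 real matrices. Then there exists a 2-dimensional subspace V of ℝ³ that is invariant under both A and B. -/
open Polynomial Filter Module Matrix

/-- An odd-degree monic real polynomial has a root. -/
private lemma aux_odd_root (p : ℝ[X]) (hm : p.Monic) (ho : Odd p.natDegree) :
    ∃ x : ℝ, p.IsRoot x := by
  have hd0 : p.natDegree ≠ 0 := by
    intro h; rw [h] at ho; simp at ho
  have hdeg : 0 < p.degree := natDegree_pos_iff_degree_pos.mp (Nat.pos_of_ne_zero hd0)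
  have htop : Tendsto (fun x => p.eval x) atTop atTop :=
    p.tendsto_atTop_of_leadingCoeff_nonneg hdeg (by rw [hm.leadingCoeff]; norm_num)
  set q := p.comp (-X) with hqdef
  have hq : ∀ x : ℝ, q.eval x = p.eval (-x) := by
    intro x; simp [hqdef, eval_comp]
  have hqnd : q.natDegree = p.natDegree := by
    rw [hqdef, natDegree_comp]
    simp
  have hqdeg : 0 < q.degree := by
    apply natDegree_pos_iff_degree_pos.mp
    rw [hqnd]
    exact Nat.pos_of_ne_zero hd0
  have hqlc : q.leadingCoeff = -1 := by
    rw [hqdef, leadingCoeff_comp (by simp)]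
    simp [hm.leadingCoeff, ho.neg_one_pow]
  have hbot : Tendsto (fun x => q.eval x) atTop atBot :=
    q.tendsto_atBot_of_leadingCoeff_nonpos hqdeg (by rw [hqlc]; norm_num)
  have h1 : ∀ᶠ x : ℝ in atTop, 0 ≤ p.eval x := htop.eventually_ge_atTop 0
  have h2 : ∀ᶠ x : ℝ in atTop, q.eval x ≤ 0 := hbot.eventually_le_atBot 0
  have h3 : ∀ᶠ x : ℝ in atTop, (0:ℝ) ≤ x := eventually_ge_atTop 0
  obtain ⟨x, hx1, hx2, hx3⟩ := (h1.and (h2.and h3)).exists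
  have hmem : (0:ℝ) ∈ Set.Icc (p.eval (-x)) (p.eval x) := by
    constructor
    · rw [← hq]; exact hx2
    · exact hx1
  obtain ⟨c, _, hc⟩ := intermediate_value_Icc (by linarith : -x ≤ x)
    (p.continuous_aeval.continuousOn) hmem
  exact ⟨c, hc⟩

/-- Every endomorphism of an odd-(finite-)dimensional real vector space has an eigenvector. -/
private lemma aux_exists_eigen {V : Type*} [AddCommGroup V] [Module ℝ V]
    [FiniteDimensional ℝ V] (f : Module.End ℝ V) (ho : Odd (finrank ℝ V)) :
    ∃ (x : V) (μ : ℝ), x ≠ 0 ∧ f x = μ • x := by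
  classical
  have h0 : finrank ℝ V ≠ 0 := by
    intro h; rw [h] at ho; simp at ho
  haveI : Nontrivial V := by
    rwa [← Module.finrank_pos_iff (R := ℝ), Nat.pos_iff_ne_zero]
  let b := Module.finBasis ℝ V
  let M := LinearMap.toMatrix b b f
  have hnd : M.charpoly.natDegree = finrank ℝ V := by
    rw [Matrix.charpoly_natDegree_eq_dim, Fintype.card_fin]
  obtain ⟨μ, hμ⟩ := aux_odd_root M.charpoly M.charpoly_monic (by rwa [hnd])
  have hdet : (Matrix.scalar (Fin (finrank ℝ V)) μ - M).det = 0 := by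
    have : M.charpoly.eval μ = (Matrix.scalar (Fin (finrank ℝ V)) μ - M).det := by
      rw [Matrix.charpoly, eval_det, Matrix.matPolyEquiv_charmatrix]
      simp
    rw [← this]; exact hμ
  obtain ⟨v, hv0, hv⟩ := (Matrix.exists_mulVec_eq_zero_iff).mpr hdet
  have hv' : M.mulVec v = μ • v := by
    have := hv
    rw [Matrix.sub_mulVec] at this
    have hsc : (Matrix.scalar (Fin (finrank ℝ V)) μ).mulVec v = μ • v := by
      ext i; simp [Matrix.scalar_apply, Matrix.mulVec_diagonal]
    rw [hsc, sub_eq_zero] at this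
    exact this.symm
  refine ⟨b.equivFun.symm v, μ, ?_, ?_⟩
  · intro h
    exact hv0 (b.equivFun.symm.map_eq_zero_iff.mp h)
  · set x := b.equivFun.symm v with hx
    have hrepr : ⇑(b.repr x) = v := by
      have h0 : ⇑(b.repr x) = b.equivFun x := (b.equivFun_apply x).symm
      rw [h0, hx, b.equivFun.apply_symm_apply]
    have h1 : ⇑(b.repr (f x)) = ⇑(b.repr (μ • x)) := by
      rw [← LinearMap.toMatrix_mulVec_repr b b f x, hrepr]
      rw [_root_.map_smul]
      simp only [Finsupp.coe_smul]
      rw [hrepr]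
      exact hv'
    have h2 : b.repr (f x) = b.repr (μ • x) := DFunLike.coe_injective h1
    exact b.repr.injective h2

/-- Commuting endomorphisms of `ℝ³` have a common eigenvector. -/
private lemma aux_common_eigenvector (f g : Module.End ℝ (Fin 3 → ℝ))
    (hc : f * g = g * f) :
    ∃ w : Fin 3 → ℝ, w ≠ 0 ∧ (∃ a : ℝ, f w = a • w) ∧ (∃ b : ℝ, g w = b • w) := by
  classical
  have hrank : finrank ℝ (Fin 3 → ℝ) = 3 := by simp
  obtain ⟨x, μ, hx0, hfx⟩ := aux_exists_eigen f (by rw [hrank]; decide)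
  set E := f.eigenspace μ with hE
  have hxE : x ∈ E := Module.End.mem_eigenspace_iff.mpr hfx
  have hgE : ∀ y ∈ E, g y ∈ E := by
    intro y hy
    rw [hE, Module.End.mem_eigenspace_iff] at hy ⊢
    calc f (g y) = (f * g) y := rfl
    _ = (g * f) y := by rw [hc]
    _ = g (f y) := rfl
    _ = g (μ • y) := by rw [hy]
    _ = μ • g y := map_smul g μ y
  let g' : Module.End ℝ E := g.restrict hgE
  haveI : Nontrivial E := Submodule.nontrivial_iff_ne_bot.mpr
    (fun h => hx0 (by simpa [h] using hxE))
  have hEpos : 0 < finrank ℝ E := finrank_pos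
  have hEle : finrank ℝ E ≤ 3 := le_trans (Submodule.finrank_le E) (le_of_eq hrank)
  rcases Nat.even_or_odd (finrank ℝ E) with hev | hod
  swap
  · obtain ⟨w, b, hw0, hgw⟩ := aux_exists_eigen g' hod
    refine ⟨(w : Fin 3 → ℝ), fun h => hw0 (Subtype.ext h), ⟨μ, ?_⟩, ⟨b, ?_⟩⟩
    · exact Module.End.mem_eigenspace_iff.mp w.2
    · exact congrArg Subtype.val hgw
  · by_cases hex : ∃ (w : E) (b : ℝ), w ≠ 0 ∧ g' w = b • w
    · obtain ⟨w, b, hw0, hgw⟩ := hex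
      refine ⟨(w : Fin 3 → ℝ), fun h => hw0 (Subtype.ext h), ⟨μ, ?_⟩, ⟨b, ?_⟩⟩
      · exact Module.End.mem_eigenspace_iff.mp w.2
      · exact congrArg Subtype.val hgw
    · push_neg at hex
      obtain ⟨y, ν, hy0, hgy⟩ := aux_exists_eigen g (by rw [hrank]; decide)
      set F := g.eigenspace ν with hF
      have hyF : y ∈ F := Module.End.mem_eigenspace_iff.mpr hgy
      haveI : Nontrivial F := Submodule.nontrivial_iff_ne_bot.mpr
        (fun h => hy0 (by simpa [h] using hyF))
      have hFpos : 0 < finrank ℝ F := finrank_pos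
      have hEF : E ⊓ F = ⊥ := by
        rw [Submodule.eq_bot_iff]
        intro z hz
        by_contra hz0
        refine hex ⟨z, hz.1⟩ ν (fun h => hz0 (congrArg Subtype.val h)) ?_
        apply Subtype.ext
        have : g z = ν • z := Module.End.mem_eigenspace_iff.mp hz.2
        simpa [g', LinearMap.restrict_apply] using this
      have hsum : finrank ℝ E + finrank ℝ F ≤ 3 := by
        have h1 := Submodule.finrank_sup_add_finrank_inf_eq E F
        rw [hEF] at h1
        have h2 : finrank ℝ (E ⊔ F : Submodule ℝ (Fin 3 → ℝ)) ≤ 3 :=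
          le_trans (Submodule.finrank_le _) (le_of_eq hrank)
        simp at h1
        omega
      have hF1 : finrank ℝ F = 1 := by
        rcases hev with ⟨k, hk⟩
        omega
      have hfF : ∀ y ∈ F, f y ∈ F := by
        intro z hz
        rw [hF, Module.End.mem_eigenspace_iff] at hz ⊢
        calc g (f z) = (g * f) z := rfl
        _ = (f * g) z := by rw [hc]
        _ = f (g z) := rfl
        _ = f (ν • z) := by rw [hz]
        _ = ν • f z := map_smul f ν z
      let f' : Module.End ℝ F := f.restrict hfF
      obtain ⟨w, a, hw0, hfw⟩ := aux_exists_eigen f' (by rw [hF1]; decide)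
      refine ⟨(w : Fin 3 → ℝ), fun h => hw0 (Subtype.ext h), ⟨a, ?_⟩, ⟨ν, ?_⟩⟩
      · exact congrArg Subtype.val hfw
      · exact Module.End.mem_eigenspace_iff.mp w.2

/-- Two commuting real `3×3` matrices have a common invariant `2`-dimensional subspace of `ℝ³`. -/
theorem stmt7 (A B : Matrix (Fin 3) (Fin 3) ℝ) (h : A * B = B * A) :
    ∃ V : Submodule ℝ (Fin 3 → ℝ), Module.finrank ℝ V = 2 ∧
      (∀ v ∈ V, A.mulVec v ∈ V) ∧ (∀ v ∈ V, B.mulVec v ∈ V) := by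
  classical
  set f : Module.End ℝ (Fin 3 → ℝ) := Aᵀ.mulVecLin with hf
  set g : Module.End ℝ (Fin 3 → ℝ) := Bᵀ.mulVecLin with hg
  have hc : f * g = g * f := by
    rw [hf, hg]
    have h1 : Aᵀ * Bᵀ = (B * A)ᵀ := (Matrix.transpose_mul B A).symm
    have h2 : Bᵀ * Aᵀ = (A * B)ᵀ := (Matrix.transpose_mul A B).symm
    calc Aᵀ.mulVecLin * Bᵀ.mulVecLin = (Aᵀ * Bᵀ).mulVecLin := (Matrix.mulVecLin_mul _ _).symm
    _ = (Bᵀ * Aᵀ).mulVecLin := by rw [h1, h2, h]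
    _ = Bᵀ.mulVecLin * Aᵀ.mulVecLin := Matrix.mulVecLin_mul _ _
  obtain ⟨w, hw0, ⟨a, hfw⟩, ⟨b, hgw⟩⟩ := aux_common_eigenvector f g hc
  have hfw' : Aᵀ.mulVec w = a • w := hfw
  have hgw' : Bᵀ.mulVec w = b • w := hgw
  let φ : (Fin 3 → ℝ) →ₗ[ℝ] ℝ :=
    { toFun := fun v => dotProduct w v
      map_add' := fun u v => dotProduct_add w u v
      map_smul' := fun c v => dotProduct_smul c w v }
  have hww : dotProduct w w ≠ 0 := by
    intro hcon
    exact hw0 ((dotProduct_self_eq_zero).mp hcon)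
  have hsurj : Function.Surjective φ := by
    intro r
    refine ⟨(r / dotProduct w w) • w, ?_⟩
    show dotProduct w ((r / dotProduct w w) • w) = r
    rw [dotProduct_smul, smul_eq_mul, div_mul_cancel₀ r hww]
  refine ⟨LinearMap.ker φ, ?_, ?_, ?_⟩
  · have hrn := LinearMap.finrank_range_add_finrank_ker φ
    rw [LinearMap.range_eq_top.mpr hsurj] at hrn
    simp only [finrank_top, Module.finrank_self] at hrn
    have : finrank ℝ (Fin 3 → ℝ) = 3 := by simp
    omega
  · intro v hv
    rw [LinearMap.mem_ker] at hv ⊢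
    show dotProduct w (A.mulVec v) = 0
    rw [Matrix.dotProduct_mulVec, ← Matrix.mulVec_transpose, hfw',
      smul_dotProduct]
    have : dotProduct w v = 0 := hv
    rw [this, smul_zero]
  · intro v hv
    rw [LinearMap.mem_ker] at hv ⊢
    show dotProduct w (B.mulVec v) = 0
    rw [Matrix.dotProduct_mulVec, ← Matrix.mulVec_transpose, hgw',
      smul_dotProduct]
    have : dotProduct w v = 0 := hv
    rw [this, smul_zero]
end

section
/- Let A, B be 3×3 real matrices whose images in pgl(3,ℝ) = gl(3,ℝ)/(scalar matrices) commute. Then there exists an invertible 3×3 real matrix P such that P⁻¹AP and P⁻¹BP each have the form of a block upper-triangular matrix whose bottom row is (0, 0, *), i.e., after adjusting by scalars they lie in the affine subalgebra aff(2,ℝ). -/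
open Polynomial in
lemma real_odd_root (p : ℝ[X]) (hp : p.degree = 3) : ∃ x : ℝ, p.IsRoot x := by
  have hp0 : p ≠ 0 := fun h => by simp [h] at hp
  obtain ⟨z, hz⟩ := Complex.exists_root (f := p.map (algebraMap ℝ ℂ))
    (by rw [degree_map]; rw [hp]; norm_num)
  have hz' : aeval z p = 0 := by
    rw [aeval_def, eval₂_eq_eval_map]; exact hz
  by_cases him : z.im = 0
  · lift z to ℝ using him
    refine ⟨z, ?_⟩
    erw [aeval_ofReal, RCLike.ofReal_eq_zero] at hz'
    simpa using hz'
  · obtain ⟨r, hr⟩ := p.quadratic_dvd_of_aeval_eq_zero_im_ne_zero hz' him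
    have hq2 : (X ^ 2 - C (2 * z.re) * X + C (‖z‖ ^ 2) : ℝ[X]).degree = 2 := by compute_degree!
    have hr0 : r ≠ 0 := fun h => by rw [h, mul_zero] at hr; exact hp0 hr
    have hq0 : (X ^ 2 - C (2 * z.re) * X + C (‖z‖ ^ 2) : ℝ[X]) ≠ 0 :=
      fun h => by rw [h] at hq2; simp at hq2
    have hnd : p.natDegree = 3 := natDegree_eq_of_degree_eq_some hp
    have hq2n : (X ^ 2 - C (2 * z.re) * X + C (‖z‖ ^ 2) : ℝ[X]).natDegree = 2 :=
      natDegree_eq_of_degree_eq_some hq2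
    have hrn : r.natDegree = 1 := by
      have := hnd
      rw [hr, natDegree_mul hq0 hr0, hq2n] at this
      omega
    have hrd : r.degree = 1 := by rw [degree_eq_natDegree hr0, hrn]; rfl
    obtain ⟨x, hx⟩ := exists_root_of_degree_eq_one hrd
    exact ⟨x, by rw [hr]; exact IsRoot.dvd hx ⟨_, mul_comm _ _⟩⟩

open Matrix in
lemma exists_eigen (M : Matrix (Fin 3) (Fin 3) ℝ) :
    ∃ (a : ℝ) (v : Fin 3 → ℝ), v ≠ 0 ∧ M *ᵥ v = a • v := by
  obtain ⟨a, ha⟩ := real_odd_root M.charpoly (by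
    rw [Matrix.charpoly_degree_eq_dim]; simp)
  have hdet : (a • (1 : Matrix (Fin 3) (Fin 3) ℝ) - M).det = 0 := by
    have : Polynomial.eval a M.charpoly =
        ((charmatrix M).map (Polynomial.evalRingHom a)).det := by
      rw [Matrix.charpoly]
      have h := RingHom.map_det (Polynomial.evalRingHom a) (charmatrix M)
      rw [RingHom.mapMatrix_apply] at h
      exact h
    rw [Polynomial.IsRoot] at ha
    rw [this] at ha
    convert ha using 2
    ext i j
    by_cases hij : i = j <;>
      simp [hij, charmatrix_apply, Matrix.map_apply, Matrix.one_apply, Matrix.smul_apply,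
        Matrix.sub_apply, Matrix.diagonal_apply]
  obtain ⟨v, hv0, hv⟩ := (Matrix.exists_mulVec_eq_zero_iff).2 hdet
  refine ⟨a, v, hv0, ?_⟩
  have := hv
  rw [Matrix.sub_mulVec, Matrix.smul_mulVec, Matrix.one_mulVec, sub_eq_zero] at this
  exact this.symm

open Matrix Module in
lemma common_eigen (A B : Matrix (Fin 3) (Fin 3) ℝ) (hc : A * B = B * A) :
    ∃ (a b : ℝ) (w : Fin 3 → ℝ), w ≠ 0 ∧ A *ᵥ w = a • w ∧ B *ᵥ w = b • w := by
  obtain ⟨a, v, hv0, hv⟩ := exists_eigen A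
  obtain ⟨b, u, hu0, hu⟩ := exists_eigen B
  set V : Submodule ℝ (Fin 3 → ℝ) :=
    LinearMap.ker (A.mulVecLin - a • LinearMap.id) with hVdef
  set W : Submodule ℝ (Fin 3 → ℝ) :=
    LinearMap.ker (B.mulVecLin - b • LinearMap.id) with hWdef
  have memV : ∀ x, x ∈ V ↔ A *ᵥ x = a • x := by
    intro x
    rw [hVdef, LinearMap.mem_ker, LinearMap.sub_apply, LinearMap.smul_apply, LinearMap.id_apply,
      mulVecLin_apply, sub_eq_zero]
  have memW : ∀ x, x ∈ W ↔ B *ᵥ x = b • x := by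
    intro x
    rw [hWdef, LinearMap.mem_ker, LinearMap.sub_apply, LinearMap.smul_apply, LinearMap.id_apply,
      mulVecLin_apply, sub_eq_zero]
  have hvV : v ∈ V := (memV v).2 hv
  have huW : u ∈ W := (memW u).2 hu
  have hBV : ∀ x ∈ V, B *ᵥ x ∈ V := by
    intro x hx
    rw [memV] at hx ⊢
    rw [mulVec_mulVec, hc, ← mulVec_mulVec, hx, mulVec_smul]
  have hAW : ∀ x ∈ W, A *ᵥ x ∈ W := by
    intro x hx
    rw [memW] at hx ⊢
    rw [mulVec_mulVec, ← hc, ← mulVec_mulVec, hx, mulVec_smul]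
  by_cases hV1 : finrank ℝ V = 1
  · have hsp : (ℝ ∙ v) = V := by
      apply Submodule.eq_of_le_of_finrank_le
      · rwa [Submodule.span_singleton_le_iff_mem]
      · rw [hV1, finrank_span_singleton hv0]
    obtain ⟨c, hcv⟩ := Submodule.mem_span_singleton.1 (hsp ▸ hBV v hvV)
    exact ⟨a, c, v, hv0, hv, hcv.symm⟩
  by_cases hW1 : finrank ℝ W = 1
  · have hsp : (ℝ ∙ u) = W := by
      apply Submodule.eq_of_le_of_finrank_le
      · rwa [Submodule.span_singleton_le_iff_mem]
      · rw [hW1, finrank_span_singleton hu0]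
    obtain ⟨c, hcu⟩ := Submodule.mem_span_singleton.1 (hsp ▸ hAW u huW)
    exact ⟨c, b, u, hu0, hcu.symm, hu⟩
  · have hVpos : 0 < finrank ℝ V :=
      Module.finrank_pos_iff.2 ⟨⟨⟨v, hvV⟩, 0, by simpa using hv0⟩⟩
    have hWpos : 0 < finrank ℝ W :=
      Module.finrank_pos_iff.2 ⟨⟨⟨u, huW⟩, 0, by simpa using hu0⟩⟩
    have hsum := Submodule.finrank_sup_add_finrank_inf_eq V W
    have hle : finrank ℝ ↥(V ⊔ W) ≤ 3 := by
      have := Submodule.finrank_le (V ⊔ W)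
      simpa using this
    have hinf : 0 < finrank ℝ ↥(V ⊓ W) := by omega
    have : Nontrivial ↥(V ⊓ W) := Module.finrank_pos_iff.1 hinf
    obtain ⟨⟨w, hwVW⟩, hw0⟩ := exists_ne (0 : ↥(V ⊓ W))
    have hw0' : w ≠ 0 := by
      intro h; apply hw0; ext; simp [h]
    exact ⟨a, b, w, hw0', (memV w).1 hwVW.1, (memW w).1 hwVW.2⟩

open Matrix in
lemma exists_R (w : Fin 3 → ℝ) (hw : w ≠ 0) :
    ∃ R : Matrix (Fin 3) (Fin 3) ℝ, IsUnit R.det ∧ R *ᵥ w = Pi.single 2 1 := by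
  obtain ⟨i, hi⟩ := Function.ne_iff.1 hw
  simp only [Pi.zero_apply] at hi
  fin_cases i
  · replace hi : w 0 ≠ 0 := hi
    refine ⟨!![-(w 1)/(w 0), 1, 0; -(w 2)/(w 0), 0, 1; 1/(w 0), 0, 0], ?_, ?_⟩
    · rw [isUnit_iff_ne_zero, Matrix.det_fin_three]
      norm_num [hi, Matrix.vecHead, Matrix.vecTail, Matrix.cons_val_two, Matrix.cons_val_one, Matrix.cons_val_zero]
    · funext j
      fin_cases j <;>
        simp [Matrix.mulVec, dotProduct, Fin.sum_univ_three, Pi.single_apply] <;>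
        field_simp <;>
        ring
  · replace hi : w 1 ≠ 0 := hi
    refine ⟨!![1, -(w 0)/(w 1), 0; 0, -(w 2)/(w 1), 1; 0, 1/(w 1), 0], ?_, ?_⟩
    · rw [isUnit_iff_ne_zero, Matrix.det_fin_three]
      norm_num [hi, Matrix.vecHead, Matrix.vecTail, Matrix.cons_val_two, Matrix.cons_val_one, Matrix.cons_val_zero]
    · funext j
      fin_cases j <;>
        simp [Matrix.mulVec, dotProduct, Fin.sum_univ_three, Pi.single_apply] <;>
        field_simp <;>
        ring
  · replace hi : w 2 ≠ 0 := hi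
    refine ⟨!![1, 0, -(w 0)/(w 2); 0, 1, -(w 1)/(w 2); 0, 0, 1/(w 2)], ?_, ?_⟩
    · rw [isUnit_iff_ne_zero, Matrix.det_fin_three]
      norm_num [hi, Matrix.vecHead, Matrix.vecTail, Matrix.cons_val_two, Matrix.cons_val_one, Matrix.cons_val_zero]
    · funext j
      fin_cases j <;>
        simp [Matrix.mulVec, dotProduct, Fin.sum_univ_three, Pi.single_apply] <;>
        field_simp <;>
        ring

open Matrix in
lemma conj_row (A R : Matrix (Fin 3) (Fin 3) ℝ) (hR : IsUnit R.det) (w : Fin 3 → ℝ) (a : ℝ)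
    (hw : R *ᵥ w = Pi.single 2 1) (ha : Aᵀ *ᵥ w = a • w) (j : Fin 3) (hj : j ≠ 2) :
    ((Rᵀ)⁻¹ * A * Rᵀ) 2 j = 0 := by
  have hM : (Rᵀ)⁻¹ * A * Rᵀ = (R * Aᵀ * R⁻¹)ᵀ := by
    rw [transpose_mul, transpose_mul, transpose_transpose, transpose_nonsing_inv, mul_assoc]
  rw [hM, transpose_apply]
  have hcol : (R * Aᵀ * R⁻¹) *ᵥ Pi.single 2 1 = a • (Pi.single 2 1 : Fin 3 → ℝ) := by
    rw [← hw, mulVec_mulVec, mul_assoc, Matrix.nonsing_inv_mul R hR, mul_one,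
      ← mulVec_mulVec, ha, mulVec_smul, hw]
  have := congrFun hcol j
  rw [mulVec_single] at this
  simpa [Pi.single_apply, hj] using this


open Matrix in
/-- If the images of `A, B` in `pgl(3,ℝ)` commute (i.e. `AB - BA` is a scalar matrix), then
after a suitable base change both matrices have last row of the form `(0, 0, *)`, i.e. they
lie in (a scalar translate of) the affine subalgebra `aff(2,ℝ)`. -/
theorem stmt8 (A B : Matrix (Fin 3) (Fin 3) ℝ)
    (h : ∃ c : ℝ, A * B - B * A = c • (1 : Matrix (Fin 3) (Fin 3) ℝ)) :
    ∃ P : Matrix (Fin 3) (Fin 3) ℝ, IsUnit P ∧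
      (P⁻¹ * A * P) 2 0 = 0 ∧ (P⁻¹ * A * P) 2 1 = 0 ∧
      (P⁻¹ * B * P) 2 0 = 0 ∧ (P⁻¹ * B * P) 2 1 = 0 := by
  obtain ⟨c, hc⟩ := h
  have hc0 : c = 0 := by
    have ht := congrArg Matrix.trace hc
    rw [Matrix.trace_sub, Matrix.trace_mul_comm, sub_self, Matrix.trace_smul,
      Matrix.trace_one] at ht
    simp only [Fintype.card_fin] at ht
    have : (0 : ℝ) = c * 3 := by simpa [smul_eq_mul] using ht
    linarith
  rw [hc0, zero_smul, sub_eq_zero] at hc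
  have hcT : Aᵀ * Bᵀ = Bᵀ * Aᵀ := by
    rw [← Matrix.transpose_mul, ← Matrix.transpose_mul, hc]
  obtain ⟨a, b, w, hw0, haw, hbw⟩ := common_eigen Aᵀ Bᵀ hcT
  obtain ⟨R, hRdet, hRw⟩ := exists_R w hw0
  refine ⟨Rᵀ, ?_, ?_, ?_, ?_, ?_⟩
  · rw [Matrix.isUnit_iff_isUnit_det, Matrix.det_transpose]
    exact hRdet
  · exact conj_row A R hRdet w a hRw haw 0 (by decide)
  · exact conj_row A R hRdet w a hRw haw 1 (by decide)
  · exact conj_row B R hRdet w b hRw hbw 0 (by decide)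
  · exact conj_row B R hRdet w b hRw hbw 1 (by decide)
end

section
/- A diffeomorphism ψ₀ : ℝ² → ℝ² that maps every line into a line is an affine transformation, i.e., ψ₀(v) = Lv + w for an invertible 2×2 matrix L and vector w. -/
open Filter Topology

private lemma para_of_cross {u v : ℝ × ℝ} (hv : v ≠ 0)
    (h : u.1 * v.2 - u.2 * v.1 = 0) : ∃ c : ℝ, u = c • v := by
  by_cases h1 : v.1 = 0
  · have hv2 : v.2 ≠ 0 := fun h2 => hv (Prod.ext h1 h2)
    refine ⟨u.2 / v.2, Prod.ext ?_ ?_⟩ <;> simp [smul_eq_mul, h1]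
    · have : u.1 * v.2 = 0 := by rw [h1] at h; linarith
      rcases mul_eq_zero.mp this with h' | h'
      · exact h'
      · exact absurd h' hv2
    · field_simp
  · refine ⟨u.1 / v.1, Prod.ext ?_ ?_⟩ <;> simp [smul_eq_mul]
    · field_simp
    · field_simp
      linarith

/-- A diffeomorphism of `ℝ²` mapping every line into a line is affine:
`ψ₀(v) = L v + w` with `L` an invertible linear map. -/
theorem stmt12 (ψ ψinv : ℝ × ℝ → ℝ × ℝ)
    (hbij : Function.Bijective ψ)
    (hsm : ContDiff ℝ (⊤ : ℕ∞) ψ) (hsminv : ContDiff ℝ (⊤ : ℕ∞) ψinv)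
    (hinv : Function.LeftInverse ψinv ψ)
    (hline : ∀ p d : ℝ × ℝ, d ≠ 0 → ∃ p' d' : ℝ × ℝ, d' ≠ 0 ∧
      ψ '' {q : ℝ × ℝ | ∃ t : ℝ, q = p + t • d} ⊆ {q : ℝ × ℝ | ∃ t : ℝ, q = p' + t • d'}) :
    ∃ (L : (ℝ × ℝ) →ₗ[ℝ] (ℝ × ℝ)) (w : ℝ × ℝ),
      Function.Bijective L ∧ ∀ v : ℝ × ℝ, ψ v = L v + w := by
  classical
  have hψd : Differentiable ℝ ψ := hsm.differentiable (by simp)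
  have hψinvd : Differentiable ℝ ψinv := hsminv.differentiable (by simp)
  set A := fderiv ℝ ψ 0 with hAdef
  set B := fderiv ℝ ψinv (ψ 0) with hBdef
  have hcomp : B.comp A = ContinuousLinearMap.id ℝ (ℝ × ℝ) := by
    have h1 : ψinv ∘ ψ = id := funext hinv
    have h2 := fderiv_comp 0 (hψinvd (ψ 0)) (hψd 0)
    rw [h1, fderiv_id] at h2
    exact h2.symm
  have hAinj : ∀ x : ℝ × ℝ, A x = 0 → x = 0 := by
    intro x hx
    have hBA : B (A x) = x := by
      rw [← ContinuousLinearMap.comp_apply, hcomp]; rfl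
    rw [hx] at hBA
    simpa using hBA.symm
  have hAne : ∀ x : ℝ × ℝ, x ≠ 0 → A x ≠ 0 := fun x hx h => hx (hAinj x h)
  -- Step: for v ≠ 0, ψ v = ψ 0 + c • A v with c ≠ 0
  have key : ∀ v : ℝ × ℝ, v ≠ 0 → ∃ c : ℝ, c ≠ 0 ∧ ψ v = ψ 0 + c • A v := by
    intro v hv
    obtain ⟨p', d', hd', hsub⟩ := hline 0 v hv
    have hmem : ∀ t : ℝ, ∃ s : ℝ, ψ (t • v) = p' + s • d' := by
      intro t
      exact hsub ⟨t • v, ⟨t, by simp⟩, rfl⟩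
    obtain ⟨s0, hs0⟩ := hmem 0
    have hs0' : ψ 0 = p' + s0 • d' := by simpa using hs0
    have hdiffmem : ∀ t : ℝ, ψ (t • v) - ψ 0 ∈ Submodule.span ℝ {d'} := by
      intro t
      obtain ⟨s, hs⟩ := hmem t
      rw [hs, hs0']
      have : p' + s • d' - (p' + s0 • d') = (s - s0) • d' := by module
      rw [this]
      exact Submodule.smul_mem _ _ (Submodule.mem_span_singleton_self d')
    have hderiv : HasDerivAt (fun t : ℝ => ψ (t • v)) (A v) 0 := by
      have h1 : HasDerivAt (fun t : ℝ => t • v) v 0 := by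
        simpa using (hasDerivAt_id (0:ℝ)).smul_const v
      have h2 : HasFDerivAt ψ A ((0:ℝ) • v) := by
        rw [zero_smul]; exact (hψd 0).hasFDerivAt
      exact h2.comp_hasDerivAt 0 h1
    have hAv_mem : A v ∈ Submodule.span ℝ {d'} := by
      have hclosed : IsClosed ((Submodule.span ℝ {d'} : Submodule ℝ (ℝ × ℝ)) : Set (ℝ × ℝ)) :=
        Submodule.closed_of_finiteDimensional _
      have hslope := hasDerivAt_iff_tendsto_slope.mp hderiv
      refine hclosed.mem_of_tendsto hslope (Filter.Eventually.of_forall fun t => ?_)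
      show slope (fun t : ℝ => ψ (t • v)) 0 t ∈ (Submodule.span ℝ {d'} : Submodule ℝ (ℝ × ℝ))
      have : slope (fun t : ℝ => ψ (t • v)) 0 t = (t - 0)⁻¹ • (ψ (t • v) - ψ ((0:ℝ) • v)) := rfl
      rw [this, zero_smul]
      exact Submodule.smul_mem _ _ (hdiffmem t)
    rw [Submodule.mem_span_singleton] at hAv_mem
    obtain ⟨μ, hμ⟩ := hAv_mem
    have hμ0 : μ ≠ 0 := by
      intro h
      apply hAne v hv
      rw [← hμ, h, zero_smul]
    have h1 : ψ v - ψ 0 ∈ Submodule.span ℝ {d'} := by simpa using hdiffmem 1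
    rw [Submodule.mem_span_singleton] at h1
    obtain ⟨a, ha⟩ := h1
    refine ⟨a / μ, ?_, ?_⟩
    · intro h
      have ha0 : a = 0 := by
        field_simp at h; simpa using h
      rw [ha0, zero_smul] at ha
      have : ψ v = ψ 0 := by
        have := ha.symm
        linear_combination (norm := module) this
      exact hv (hbij.1 this)
    · have : (a / μ) • A v = a • d' := by
        rw [← hμ, smul_smul, div_mul_cancel₀ _ hμ0]
      rw [this, ha]
      module
  choose! ρ hρ1 hρ2 using key
  -- uniqueness of the coefficient
  have huniq : ∀ v : ℝ × ℝ, v ≠ 0 → ∀ c : ℝ, ψ v = ψ 0 + c • A v → c = ρ v := by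
    intro v hv c hc
    have h2 := hρ2 v hv
    rw [hc] at h2
    have : (c - ρ v) • A v = 0 := by
      have := sub_eq_zero.mpr h2
      linear_combination (norm := module) this
    rcases smul_eq_zero.mp this with h | h
    · exact sub_eq_zero.mp h
    · exact absurd h (hAne v hv)
  -- Step: ρ is constant on pairs of linearly independent vectors
  have hconst : ∀ u v : ℝ × ℝ, u.1 * v.2 - u.2 * v.1 ≠ 0 → ρ u = ρ v := by
    intro u v hcross
    have hu : u ≠ 0 := by
      rintro rfl; simp at hcross
    have hv : v ≠ 0 := by
      rintro rfl; simp at hcross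
    set d : ℝ × ℝ := v - u with hddef
    have hd : d ≠ 0 := by
      rw [hddef, sub_ne_zero]
      rintro rfl; exact hcross (by ring)
    have hne : ∀ t : ℝ, u + t • d ≠ 0 := by
      intro t h0
      apply hcross
      have h1 : u.1 + t * (v.1 - u.1) = 0 := congrArg Prod.fst h0
      have h2 : u.2 + t * (v.2 - u.2) = 0 := congrArg Prod.snd h0
      linear_combination (v.2 - u.2) * h1 - (v.1 - u.1) * h2
    obtain ⟨p', d', hd', hsub⟩ := hline u d hd
    have hmem : ∀ t : ℝ, ∃ s : ℝ, ψ (u + t • d) = p' + s • d' := by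
      intro t
      exact hsub ⟨u + t • d, ⟨t, rfl⟩, rfl⟩
    set α : ℝ := (A u).1 * d'.2 - (A u).2 * d'.1 with hαdef
    set β : ℝ := (A d).1 * d'.2 - (A d).2 * d'.1 with hβdef
    set γ : ℝ := (p'.1 - (ψ 0).1) * d'.2 - (p'.2 - (ψ 0).2) * d'.1 with hγdef
    have heq : ∀ t : ℝ, ρ (u + t • d) * (α + t * β) = γ := by
      intro t
      obtain ⟨s, hs⟩ := hmem t
      have hψt : ψ (u + t • d) = ψ 0 + ρ (u + t • d) • A (u + t • d) := hρ2 _ (hne t)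
      have hA : A (u + t • d) = A u + t • A d := by
        rw [map_add, map_smul]
      rw [hψt, hA] at hs
      have e1 : (ψ 0).1 + ρ (u + t • d) * ((A u).1 + t * (A d).1) = p'.1 + s * d'.1 :=
        congrArg Prod.fst hs
      have e2 : (ψ 0).2 + ρ (u + t • d) * ((A u).2 + t * (A d).2) = p'.2 + s * d'.2 :=
        congrArg Prod.snd hs
      rw [hαdef, hβdef, hγdef]
      linear_combination d'.2 * e1 - d'.1 * e2
    have hAu : A u ≠ 0 := hAne u hu
    have hAd : A d ≠ 0 := hAne d hd
    have hcrossA : (A u).1 * (A d).2 - (A u).2 * (A d).1 ≠ 0 := by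
      intro h
      obtain ⟨c, hc⟩ := para_of_cross hAu (by linarith : (A d).1 * (A u).2 - (A d).2 * (A u).1 = 0)
      have : A (d - c • u) = 0 := by
        rw [map_sub, map_smul, hc, sub_self]
      have hdc : d = c • u := by
        have := hAinj _ this
        linear_combination (norm := module) this
      apply hcross
      have h1 : v.1 - u.1 = c * u.1 := congrArg Prod.fst hdc
      have h2 : v.2 - u.2 = c * u.2 := congrArg Prod.snd hdc
      linear_combination u.1 * h2 - u.2 * h1
    have hαβ : ¬(α = 0 ∧ β = 0) := by
      rintro ⟨hα, hβ⟩
      obtain ⟨a, ha⟩ := para_of_cross hd' (hα)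
      obtain ⟨b, hb⟩ := para_of_cross hd' (hβ)
      apply hcrossA
      have ha1 : (A u).1 = a * d'.1 := congrArg Prod.fst ha
      have ha2 : (A u).2 = a * d'.2 := congrArg Prod.snd ha
      have hb1 : (A d).1 = b * d'.1 := congrArg Prod.fst hb
      have hb2 : (A d).2 = b * d'.2 := congrArg Prod.snd hb
      rw [ha1, ha2, hb1, hb2]; ring
    have hγ0 : γ ≠ 0 := by
      intro h
      apply hαβ
      have ht0 := heq 0
      have ht1 := heq 1
      rw [h] at ht0 ht1
      have hr0 := hρ1 _ (hne 0)
      have hr1 := hρ1 _ (hne 1)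
      have e0 : α + 0 * β = 0 := by
        rcases mul_eq_zero.mp ht0 with h' | h'
        · exact absurd h' hr0
        · exact h'
      have e1 : α + 1 * β = 0 := by
        rcases mul_eq_zero.mp ht1 with h' | h'
        · exact absurd h' hr1
        · exact h'
      constructor <;> linarith
    have hβ0 : β = 0 := by
      by_contra hβ
      have := heq (-α / β)
      rw [show α + (-α / β) * β = 0 by field_simp; ring, mul_zero] at this
      exact hγ0 this.symm
    have hα0 : α ≠ 0 := fun h => hαβ ⟨h, hβ0⟩
    have h0 := heq 0
    have h1 := heq 1
    have hu0 : u + (0:ℝ) • d = u := by simp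
    have hu1 : u + (1:ℝ) • d = v := by rw [one_smul, hddef]; abel
    rw [hu0] at h0
    rw [hu1] at h1
    rw [hβ0] at h0 h1
    have : ρ u * α = ρ v * α := by linarith
    exact mul_right_cancel₀ hα0 this
  -- Step: ρ is constant on all nonzero vectors
  have hall : ∀ u v : ℝ × ℝ, u ≠ 0 → v ≠ 0 → ρ u = ρ v := by
    intro u v hu hv
    by_cases h : u.1 * v.2 - u.2 * v.1 = 0
    · set w : ℝ × ℝ := (-u.2, u.1) with hwdef
      have hpos : u.1 * u.1 + u.2 * u.2 ≠ 0 := by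
        intro h'
        apply hu
        have h1 : u.1 = 0 := by nlinarith
        have h2 : u.2 = 0 := by nlinarith
        exact Prod.ext h1 h2
      have hcuw : u.1 * w.2 - u.2 * w.1 ≠ 0 := by
        rw [hwdef]; simpa using hpos
      have hcvw : v.1 * w.2 - v.2 * w.1 ≠ 0 := by
        rw [hwdef]
        simp only
        intro h'
        apply hv
        have h1 : v.1 = 0 := by
          have : (u.1 * u.1 + u.2 * u.2) * v.1 = 0 := by linear_combination u.1 * h' - u.2 * h
          rcases mul_eq_zero.mp this with h'' | h''
          · exact absurd h'' hpos
          · exact h''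
        have h2 : v.2 = 0 := by
          have : (u.1 * u.1 + u.2 * u.2) * v.2 = 0 := by linear_combination u.2 * h' + u.1 * h
          rcases mul_eq_zero.mp this with h'' | h''
          · exact absurd h'' hpos
          · exact h''
        exact Prod.ext h1 h2
      rw [hconst u w hcuw, hconst v w hcvw]
    · exact hconst u v h
  -- Conclusion
  have he1 : ((1:ℝ), (0:ℝ)) ≠ (0 : ℝ × ℝ) := by
    intro h
    exact one_ne_zero (congrArg Prod.fst h)
  set c0 : ℝ := ρ (1, 0) with hc0def
  have hc00 : c0 ≠ 0 := hρ1 _ he1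
  refine ⟨c0 • (A : (ℝ × ℝ) →ₗ[ℝ] (ℝ × ℝ)), ψ 0, ?_, ?_⟩
  · have hinjL : Function.Injective (c0 • (A : (ℝ × ℝ) →ₗ[ℝ] (ℝ × ℝ))) := by
      rw [injective_iff_map_eq_zero]
      intro x hx
      simp only [LinearMap.smul_apply, ContinuousLinearMap.coe_coe] at hx
      rcases smul_eq_zero.mp hx with h | h
      · exact absurd h hc00
      · exact hAinj x h
    exact ⟨hinjL, LinearMap.injective_iff_surjective.mp hinjL⟩
  · intro v
    by_cases hv : v = 0
    · subst hv
      simp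
    · have := hρ2 v hv
      rw [hall v (1,0) hv he1, ← hc0def] at this
      rw [this]
      simp only [LinearMap.smul_apply, ContinuousLinearMap.coe_coe]
      abel
end
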